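/- Let f₀ : ℝ → ℂ be continuous with compact support. For t ≠ 0 define u(t,x) = (4πit)^{−1/2} ∫_ℝ e^{i(x−y)²/(4t)} f₀(y) dy, where (4πit)^{−1/2} is taken with the principal branch of the square root. Then: (1) for every t ≠ 0 and x ∈ ℝ, u is differentiable in t and twice differentiable in x at (t,x) and satisfies i ∂_t u(t,x) + ∂²_x u(t,x) = 0; and (2) for every t ≠ 0, sup_{x ∈ ℝ} |u(t,x)| ≤ (4π|t|)^{−1/2} ∫_ℝ |f₀(y)| dy. -/

import Mathlib

/-!
`u(t, ·)` is the convolution of `f₀` with the kernel `K_t(z) = (4πit)^{-1/2} e^{iz²/(4t)}`, and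
the kernel solves the equation pointwise: `∂_z² K = (i/(2t) - z²/(4t²)) K = -i ∂_t K`, the
`-K/(2t)` from differentiating the prefactor cancelling the `i/(2t)` from `∂_z²`. Since `f₀` is
continuous with compact support, each derivative of the kernel is bounded on a neighbourhood of
the parameter times the support of `f₀`, so all derivatives pass under the integral sign.
The decay bound is `|K_t| = (4π|t|)^{-1/2}`.
-/

open MeasureTheory

/-- The free Schrödinger evolution of `f₀`:
`u(t,x) = (4πit)^{-1/2} ∫ e^{i(x-y)²/(4t)} f₀(y) dy`, with the principal branch of the
square root (via the complex power function). -/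
noncomputable def freeSchrodingerSolution (f₀ : ℝ → ℂ) (t x : ℝ) : ℂ :=
  (4 * (Real.pi : ℂ) * Complex.I * (t : ℂ)) ^ (-(1 : ℂ) / 2) *
    ∫ y : ℝ, Complex.exp (Complex.I * ((x : ℂ) - (y : ℂ)) ^ 2 / (4 * (t : ℂ))) * f₀ y

open Complex Function Metric Set

section ParametricIntegral

variable {𝕜 𝕜' E : Type*} [RCLike 𝕜] [NormedField 𝕜'] [NormedAlgebra 𝕜 𝕜']
  [NormedAddCommGroup E] [NormedSpace ℝ E] [NormedSpace 𝕜' E] [NormedSpace 𝕜 E]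
  [IsScalarTower 𝕜 𝕜' E]

theorem hasDerivAt_integral_smul_of_hasCompactSupport {α : Type*} [TopologicalSpace α]
    [MeasurableSpace α] [OpensMeasurableSpace α] {μ : Measure α} [IsFiniteMeasureOnCompacts μ]
    {F F' : 𝕜 → α → 𝕜'} {f : α → E} {U : Set 𝕜} {s₀ : 𝕜} (hU : IsOpen U) (hs₀ : s₀ ∈ U)
    (hf : Continuous f) (hsupp : HasCompactSupport f)
    (hF : ∀ s ∈ U, Continuous (F s)) (hF' : ContinuousOn (uncurry F') (U ×ˢ univ))
    (hderiv : ∀ s ∈ U, ∀ y, HasDerivAt (F · y) (F' s y) s) :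
    HasDerivAt (fun s ↦ ∫ y, F s y • f y ∂μ) (∫ y, F' s₀ y • f y ∂μ) s₀ := by
  have integrable {g : α → 𝕜'} (hg : Continuous g) : Integrable (fun y ↦ g y • f y) μ :=
    (hg.smul hf).integrable_of_hasCompactSupport hsupp.smul_left
  obtain ⟨r, hr, hrU⟩ := nhds_basis_closedBall.mem_iff.1 (hU.mem_nhds hs₀)
  obtain ⟨C, hC⟩ := ((isCompact_closedBall s₀ r).prod hsupp).exists_bound_of_continuousOn
    (hF'.mono (prod_mono hrU (subset_univ _)))
  have hF's₀ : Continuous (F' s₀) :=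
    hF'.comp_continuous (continuous_const.prodMk continuous_id) fun _ ↦ ⟨hs₀, trivial⟩
  refine (hasDerivAt_integral_of_dominated_loc_of_deriv_le (F' := fun s y ↦ F' s y • f y)
    (bound := fun y ↦ C * ‖f y‖) (ball_mem_nhds s₀ hr) ?_ (integrable (hF s₀ hs₀))
    (integrable hF's₀).aestronglyMeasurable ?_
    ((hf.norm.integrable_of_hasCompactSupport hsupp.norm).const_mul C) ?_).2
  · filter_upwards [hU.mem_nhds hs₀] with s hs using (integrable (hF s hs)).aestronglyMeasurable
  · refine .of_forall fun y s hs ↦ ?_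
    by_cases hy : y ∈ tsupport f
    · rw [norm_smul]
      exact mul_le_mul_of_nonneg_right (hC (s, y) ⟨ball_subset_closedBall hs, hy⟩) (norm_nonneg _)
    · simp [image_eq_zero_of_notMem_tsupport hy]
  · exact .of_forall fun y s hs ↦ (hderiv s (hrU (ball_subset_closedBall hs)) y).smul_const _

theorem hasDerivAt_integral_comp_sub_smul [MeasurableSpace 𝕜] [OpensMeasurableSpace 𝕜]
    {μ : Measure 𝕜} [IsFiniteMeasureOnCompacts μ] {G G' : 𝕜 → 𝕜'} {f : 𝕜 → E}
    (hf : Continuous f) (hsupp : HasCompactSupport f) (hG' : Continuous G')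
    (hG : ∀ z, HasDerivAt G (G' z) z) (x₀ : 𝕜) :
    HasDerivAt (fun x ↦ ∫ y, G (x - y) • f y ∂μ) (∫ y, G' (x₀ - y) • f y ∂μ) x₀ :=
  hasDerivAt_integral_smul_of_hasCompactSupport (F' := fun x y ↦ G' (x - y)) isOpen_univ
    (mem_univ x₀) hf hsupp
    (fun _ _ ↦ (continuous_iff_continuousAt.2 fun z ↦ (hG z).continuousAt).comp
      (continuous_const.sub continuous_id))
    (hG'.comp (continuous_fst.sub continuous_snd)).continuousOn
    fun x _ y ↦ (hG (x - y)).comp_sub_const x y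

end ParametricIntegral

noncomputable def freeSchrodingerKernel (t z : ℝ) : ℂ :=
  (4 * (Real.pi : ℂ) * I * (t : ℂ)) ^ (-(1 : ℂ) / 2) * exp (I * (z : ℂ) ^ 2 / (4 * (t : ℂ)))

namespace freeSchrodingerKernel

theorem norm_eq (t z : ℝ) :
    ‖freeSchrodingerKernel t z‖ = (4 * Real.pi * |t|) ^ (-(1 : ℝ) / 2) := by
  have hphase : I * (z : ℂ) ^ 2 / (4 * (t : ℂ)) = ((z ^ 2 / (4 * t) : ℝ) : ℂ) * I := by
    push_cast; ring
  have hexp : (-(1 : ℂ) / 2) = ((-(1 : ℝ) / 2 : ℝ) : ℂ) := by push_cast; ring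
  rw [freeSchrodingerKernel, norm_mul, hphase, norm_exp_ofReal_mul_I, mul_one, hexp,
    norm_cpow_real]
  simp [abs_of_pos Real.pi_pos]

theorem hasDerivAt_space (t z : ℝ) :
    HasDerivAt (freeSchrodingerKernel t) (I * z / (2 * t) * freeSchrodingerKernel t z) z := by
  have hphase : HasDerivAt (fun w : ℂ ↦ I * w ^ 2 / (4 * (t : ℂ))) (I * z / (2 * t)) (z : ℂ) :=
    (((hasDerivAt_pow 2 (z : ℂ)).const_mul I).div_const (4 * (t : ℂ))).congr_deriv (by ring)
  exact ((hphase.cexp.comp_ofReal).const_mul _).congr_deriv (by rw [freeSchrodingerKernel]; ring)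

@[fun_prop]
theorem continuous_space (t : ℝ) : Continuous (freeSchrodingerKernel t) :=
  continuous_iff_continuousAt.2 fun z ↦ (hasDerivAt_space t z).continuousAt

theorem hasDerivAt_space_deriv (t z : ℝ) :
    HasDerivAt (fun w : ℝ ↦ I * w / (2 * t) * freeSchrodingerKernel t w)
      ((I / (2 * t) + (I * z / (2 * t)) ^ 2) * freeSchrodingerKernel t z) z := by
  have hlin : HasDerivAt (fun w : ℝ ↦ I * w / (2 * t)) (I / (2 * t)) z :=
    (((hasDerivAt_id (z : ℂ)).const_mul I).div_const (2 * (t : ℂ))).comp_ofReal.congr_deriv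
      (by simp)
  exact (hlin.mul (hasDerivAt_space t z)).congr_deriv (by ring)

theorem hasDerivAt_prefactor {t : ℝ} (ht : t ≠ 0) :
    HasDerivAt (fun s : ℝ ↦ (4 * (Real.pi : ℂ) * I * (s : ℂ)) ^ (-(1 : ℂ) / 2))
      (-1 / (2 * t) * (4 * (Real.pi : ℂ) * I * (t : ℂ)) ^ (-(1 : ℂ) / 2)) t := by
  set a : ℂ := 4 * (Real.pi : ℂ) * I with ha
  have ha0 : a ≠ 0 := by simp [ha, Real.pi_ne_zero]
  have hta : a * t ≠ 0 := mul_ne_zero ha0 (ofReal_ne_zero.2 ht)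
  have hslit : a * t ∈ slitPlane := by
    rw [mem_slitPlane_iff]; right; simp [ha, ht]
  refine (((hasDerivAt_id (t : ℂ)).const_mul a).cpow_const (c := -1 / 2) hslit).comp_ofReal
    |>.congr_deriv ?_
  rw [id, cpow_sub _ _ hta, cpow_one]
  field_simp

theorem hasDerivAt_time {t : ℝ} (ht : t ≠ 0) (z : ℝ) :
    HasDerivAt (freeSchrodingerKernel · z)
      ((-1 / (2 * t) - I * z ^ 2 / (4 * t ^ 2)) * freeSchrodingerKernel t z) t := by
  have htC : (t : ℂ) ≠ 0 := ofReal_ne_zero.2 ht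
  have hphase :
      HasDerivAt (fun s : ℂ ↦ I * (z : ℂ) ^ 2 / (4 * s)) (-(I * z ^ 2 / (4 * t ^ 2))) t := by
    refine (((hasDerivAt_id (t : ℂ)).const_mul 4).inv (by simpa using htC)).const_mul
      (I * (z : ℂ) ^ 2) |>.congr_deriv ?_ |>.congr_of_eventuallyEq ?_
    · simp only [id]
      field_simp
    · exact .of_forall fun s ↦ by simp [div_eq_mul_inv]
  exact ((hasDerivAt_prefactor ht).mul hphase.cexp.comp_ofReal).congr_deriv
    (by rw [freeSchrodingerKernel]; ring)

theorem continuousOn : ContinuousOn (uncurry freeSchrodingerKernel) ({0}ᶜ ×ˢ univ) := by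
  have hc : ContinuousOn (fun s : ℝ ↦ (4 * (Real.pi : ℂ) * I * (s : ℂ)) ^ (-(1 : ℂ) / 2)) {0}ᶜ :=
    fun s hs ↦ (hasDerivAt_prefactor hs).continuousAt.continuousWithinAt
  refine (hc.comp continuousOn_fst fun p hp ↦ hp.1).mul ?_
  refine continuous_exp.comp_continuousOn (ContinuousOn.div (by fun_prop) (by fun_prop) ?_)
  rintro ⟨s, y⟩ ⟨hs, -⟩
  simpa using hs

end freeSchrodingerKernel

theorem freeSchrodingerSolution_eq_integral (f₀ : ℝ → ℂ) (t x : ℝ) :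
    freeSchrodingerSolution f₀ t x = ∫ y, freeSchrodingerKernel t (x - y) * f₀ y := by
  rw [freeSchrodingerSolution, ← integral_const_mul]
  simp only [freeSchrodingerKernel, ofReal_sub, mul_assoc]

theorem norm_freeSchrodingerSolution_le (f₀ : ℝ → ℂ) (t x : ℝ) :
    ‖freeSchrodingerSolution f₀ t x‖ ≤ (4 * Real.pi * |t|) ^ (-(1 : ℝ) / 2) * ∫ y, ‖f₀ y‖ :=
  calc ‖freeSchrodingerSolution f₀ t x‖
      ≤ ∫ y, ‖freeSchrodingerKernel t (x - y) * f₀ y‖ := by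
        rw [freeSchrodingerSolution_eq_integral]; exact norm_integral_le_integral_norm _
    _ = (4 * Real.pi * |t|) ^ (-(1 : ℝ) / 2) * ∫ y, ‖f₀ y‖ := by
        simp only [norm_mul, freeSchrodingerKernel.norm_eq]; exact integral_const_mul _ _

theorem hasDerivAt_freeSchrodingerSolution_space {f₀ : ℝ → ℂ} (hf : Continuous f₀)
    (hsupp : HasCompactSupport f₀) (t x : ℝ) :
    HasDerivAt (freeSchrodingerSolution f₀ t)
      (∫ y, I * ↑(x - y) / (2 * t) * freeSchrodingerKernel t (x - y) * f₀ y) x := by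
  simp only [funext (freeSchrodingerSolution_eq_integral f₀ t)]
  exact hasDerivAt_integral_comp_sub_smul hf hsupp (by fun_prop)
    (freeSchrodingerKernel.hasDerivAt_space t) x

theorem hasDerivAt_freeSchrodingerSolution_space_deriv {f₀ : ℝ → ℂ} (hf : Continuous f₀)
    (hsupp : HasCompactSupport f₀) (t x : ℝ) :
    HasDerivAt (fun ξ ↦ ∫ y, I * ↑(ξ - y) / (2 * t) * freeSchrodingerKernel t (ξ - y) * f₀ y)
      (∫ y, (I / (2 * t) + (I * ↑(x - y) / (2 * t)) ^ 2) * freeSchrodingerKernel t (x - y) *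
        f₀ y) x :=
  hasDerivAt_integral_comp_sub_smul hf hsupp (by fun_prop)
    (freeSchrodingerKernel.hasDerivAt_space_deriv t) x

theorem hasDerivAt_freeSchrodingerSolution_time {f₀ : ℝ → ℂ} (hf : Continuous f₀)
    (hsupp : HasCompactSupport f₀) {t : ℝ} (ht : t ≠ 0) (x : ℝ) :
    HasDerivAt (freeSchrodingerSolution f₀ · x)
      (∫ y, (-1 / (2 * t) - I * ↑(x - y) ^ 2 / (4 * t ^ 2)) * freeSchrodingerKernel t (x - y) *
        f₀ y) t := by
  simp only [freeSchrodingerSolution_eq_integral]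
  refine hasDerivAt_integral_smul_of_hasCompactSupport
    (F := fun s y ↦ freeSchrodingerKernel s (x - y)) isOpen_compl_singleton ht hf hsupp
    (fun s _ ↦ by fun_prop) ?_ fun s hs y ↦ freeSchrodingerKernel.hasDerivAt_time hs (x - y)
  have hK : ContinuousOn (fun p : ℝ × ℝ ↦ freeSchrodingerKernel p.1 (x - p.2)) ({0}ᶜ ×ˢ univ) :=
    freeSchrodingerKernel.continuousOn.comp (f := fun p : ℝ × ℝ ↦ (p.1, x - p.2))
      (by fun_prop) fun p hp ↦ ⟨hp.1, trivial⟩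
  exact ContinuousOn.mul (by fun_prop (disch := intro p hp; simp_all)) hK

/-- For continuous compactly supported `f₀`, the function
`u(t,x) = (4πit)^{-1/2} ∫ e^{i(x-y)²/(4t)} f₀(y) dy` satisfies, for `t ≠ 0`:
(1) it is differentiable in `t` and twice differentiable in `x`, with
`i ∂ₜu + ∂ₓₓu = 0`; and (2) `sup_x |u(t,x)| ≤ (4π|t|)^{-1/2} ‖f₀‖_{L¹}`. -/
theorem freeSchrodinger_fundamental_solution (f₀ : ℝ → ℂ)
    (hf₀ : Continuous f₀) (hsupp : HasCompactSupport f₀) :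
    (∀ t : ℝ, t ≠ 0 → ∀ x : ℝ,
      ∃ ut uxx : ℂ, ∃ ux : ℝ → ℂ,
        HasDerivAt (fun τ : ℝ => freeSchrodingerSolution f₀ τ x) ut t ∧
        (∀ ξ : ℝ, HasDerivAt (fun ξ' : ℝ => freeSchrodingerSolution f₀ t ξ') (ux ξ) ξ) ∧
        HasDerivAt ux uxx x ∧
        Complex.I * ut + uxx = 0) ∧
    (∀ t : ℝ, t ≠ 0 → ∀ x : ℝ,
      ‖freeSchrodingerSolution f₀ t x‖
        ≤ (4 * Real.pi * |t|) ^ (-(1 : ℝ) / 2) * ∫ y : ℝ, ‖f₀ y‖) := by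
  refine ⟨fun t ht x ↦ ?_, fun t _ x ↦ norm_freeSchrodingerSolution_le f₀ t x⟩
  -- `∂_z² K = -i ∂_t K`, read off the multipliers in `hasDerivAt_space_deriv` and `hasDerivAt_time`
  have hkernel (z : ℝ) : I / (2 * t) + (I * z / (2 * t)) ^ 2
      = -I * (-1 / (2 * t) - I * z ^ 2 / (4 * t ^ 2)) := by
    have htC : (t : ℂ) ≠ 0 := ofReal_ne_zero.2 ht
    field_simp
    ring
  refine ⟨_, _, _, hasDerivAt_freeSchrodingerSolution_time hf₀ hsupp ht x,
    hasDerivAt_freeSchrodingerSolution_space hf₀ hsupp t,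
    hasDerivAt_freeSchrodingerSolution_space_deriv hf₀ hsupp t x, ?_⟩
  simp only [hkernel, mul_assoc, integral_const_mul]
  ring
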